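/- arXiv:1007.4398 — 3 statements merged into one kernel-verified Lean document; each statement's English description precedes it below -/
import Mathlib

section
/- Let c : Fin q → ℝ. Then the face of the permutohedron 𝒫 exposed by the linear functional x ↦ ∑ i, c i * x i, namely the set {x ∈ 𝒫 | ∀ y ∈ 𝒫, ∑ i, c i * y i ≤ ∑ i, c i * x i}, equals the convex hull over ℝ of the set {P_π | Monotone (c ∘ π)}. (This is the face τ_J of 𝒫 corresponding to the ordered partition J = J(c) of {1,…,q} determined by grouping indices with equal c-values and ordering the groups by those values.) -/
/-- The vertex `P_π` of the permutohedron: `P_π i = (π.symm i + 1) - (q+1)/2`. -/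
noncomputable def permutohedronVertex (q : ℕ) (π : Equiv.Perm (Fin q)) : Fin q → ℝ :=
  fun i => ((π.symm i : ℕ) : ℝ) + 1 - ((q : ℝ) + 1) / 2

/-- The permutohedron `𝒫 ⊆ (Fin q → ℝ)`: the convex hull of the points `P_π`. -/
noncomputable def permutohedron (q : ℕ) : Set (Fin q → ℝ) :=
  convexHull ℝ (Set.range (permutohedronVertex q))

/-- The face of the permutohedron exposed by the functional `x ↦ ∑ i, c i * x i` is the
convex hull of those vertices `P_π` for which `c ∘ π` is nondecreasing. -/
theorem permutohedron_exposed_face (q : ℕ) (hq : 1 ≤ q) (c : Fin q → ℝ) :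
    {x ∈ permutohedron q | ∀ y ∈ permutohedron q, ∑ i, c i * y i ≤ ∑ i, c i * x i} =
      convexHull ℝ {x : Fin q → ℝ |
        ∃ π : Equiv.Perm (Fin q), Monotone (c ∘ π) ∧ permutohedronVertex q π = x} := by
  classical
  set f : (Fin q → ℝ) → ℝ := fun x => ∑ i, c i * x i with hf_def
  have hf_lin : IsLinearMap ℝ f := by
    constructor
    · intro x y
      simp [hf_def, mul_add, Finset.sum_add_distrib]
    · intro r x
      simp only [hf_def, Pi.smul_apply, smul_eq_mul, Finset.mul_sum]
      exact Finset.sum_congr rfl (fun i _ => by ring)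
  have hf_app : ∀ x, f x = ∑ i, c i * x i := fun _ => rfl
  set g : Fin q → ℝ := fun k => ((k : ℕ) : ℝ) + 1 - ((q : ℝ) + 1) / 2 with hg_def
  have hg : StrictMono g := by
    intro i j hij
    have : ((i : ℕ) : ℝ) < ((j : ℕ) : ℝ) := by exact_mod_cast hij
    simp only [hg_def]
    linarith
  -- value of f at a vertex
  have hval : ∀ π : Equiv.Perm (Fin q),
      f (permutohedronVertex q π) = ∑ k, c (π k) * g k := by
    intro π
    rw [hf_app]
    rw [← Equiv.sum_comp π (fun i => c i * permutohedronVertex q π i)]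
    simp [permutohedronVertex, hg_def]
  -- sorting permutation
  set σ₀ : Equiv.Perm (Fin q) := Tuple.sort c with hσ₀
  have hmono : Monotone (c ∘ σ₀) := Tuple.monotone_sort c
  have hmv : Monovary (c ∘ σ₀) g := fun i j h => hmono (hg.lt_iff_lt.mp h).le
  set M : ℝ := ∑ k, (c ∘ σ₀) k * g k with hM
  have hsub : ∀ π : Equiv.Perm (Fin q),
      (∀ k, c (π k) = (c ∘ σ₀) ((π.trans σ₀.symm) k)) := by
    intro π k; simp
  -- f at vertex ≤ M, with equality iff monotone
  have hle : ∀ π : Equiv.Perm (Fin q), f (permutohedronVertex q π) ≤ M := by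
    intro π
    rw [hval π]
    have := hmv.sum_comp_perm_smul_le_sum_smul (σ := π.trans σ₀.symm)
    simpa [smul_eq_mul, (hsub π _).symm, hM] using this
  have heq : ∀ π : Equiv.Perm (Fin q),
      f (permutohedronVertex q π) = M ↔ Monotone (c ∘ π) := by
    intro π
    rw [hval π]
    have h1 : (∑ k, (c ∘ σ₀) ((π.trans σ₀.symm) k) • g k = ∑ k, (c ∘ σ₀) k • g k)
        ↔ Monovary ((c ∘ σ₀) ∘ (π.trans σ₀.symm)) g :=
      hmv.sum_comp_perm_smul_eq_sum_smul_iff (σ := π.trans σ₀.symm)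
    have h2 : ((c ∘ σ₀) ∘ (π.trans σ₀.symm)) = c ∘ π := by
      funext k; simp
    rw [h2] at h1
    have h3 : (∑ k, c (π k) * g k = M) ↔ Monovary (c ∘ π) g := by
      rw [← h1]
      constructor <;> intro h <;>
        · simpa [smul_eq_mul, (hsub π _).symm, hM] using h
    rw [h3]
    constructor
    · intro h i j hij
      rcases eq_or_lt_of_le hij with h' | h'
      · rw [h']
      · exact h (hg h')
    · intro h i j hij
      exact h (hg.lt_iff_lt.mp hij).le
  -- permutohedron ⊆ {x | f x ≤ M}
  have hPle : ∀ y ∈ permutohedron q, f y ≤ M := by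
    intro y hy
    have : permutohedron q ⊆ {x | f x ≤ M} := by
      apply convexHull_min _ (convex_halfSpace_le hf_lin M)
      rintro _ ⟨π, rfl⟩
      exact hle π
    exact this hy
  -- the RHS hull ⊆ {x | f x = M}
  have hTeq : ∀ x ∈ convexHull ℝ {x : Fin q → ℝ |
      ∃ π : Equiv.Perm (Fin q), Monotone (c ∘ π) ∧ permutohedronVertex q π = x},
      f x = M := by
    intro x hx
    have : convexHull ℝ {x : Fin q → ℝ |
        ∃ π : Equiv.Perm (Fin q), Monotone (c ∘ π) ∧ permutohedronVertex q π = x}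
        ⊆ {x | f x = M} := by
      apply convexHull_min _ (convex_hyperplane hf_lin M)
      rintro _ ⟨π, hπ, rfl⟩
      exact (heq π).mpr hπ
    exact this hx
  have hTsubS : {x : Fin q → ℝ |
      ∃ π : Equiv.Perm (Fin q), Monotone (c ∘ π) ∧ permutohedronVertex q π = x}
      ⊆ Set.range (permutohedronVertex q) := by
    rintro _ ⟨π, _, rfl⟩; exact ⟨π, rfl⟩
  ext x
  constructor
  · rintro ⟨hxP, hxmax⟩
    -- f x = M
    have hσ₀mem : permutohedronVertex q σ₀ ∈ permutohedron q :=
      subset_convexHull ℝ _ ⟨σ₀, rfl⟩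
    have hfx : f x = M := by
      have h1 : f x ≤ M := hPle x hxP
      have h2 : M ≤ f x := by
        have := hxmax _ hσ₀mem
        simp only [← hf_app] at this ⊢
        calc M = f (permutohedronVertex q σ₀) := ((heq σ₀).mpr hmono).symm
          _ ≤ f x := this
      linarith
    -- express x as convex combination of vertices
    have hS : Set.range (permutohedronVertex q) =
        ↑(Finset.image (permutohedronVertex q) Finset.univ) := by
      simp
    rw [permutohedron, hS, Finset.convexHull_eq] at hxP
    obtain ⟨w, hw₀, hw₁, hwx⟩ := hxP
    set s := Finset.image (permutohedronVertex q) Finset.univ with hs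
    have hcm : ∑ y ∈ s, w y • y = x := by
      rw [← hwx, Finset.centerMass_eq_of_sum_1 _ _ hw₁]
      rfl
    have hfsum : ∑ y ∈ s, w y * f y = M := by
      have : f (∑ y ∈ s, w y • y) = ∑ y ∈ s, w y * f y := by
        rw [show f (∑ y ∈ s, w y • y) = (hf_lin.mk' f) (∑ y ∈ s, w y • y) from rfl,
          map_sum]
        exact Finset.sum_congr rfl (fun y _ => by
          rw [map_smul]; simp [smul_eq_mul])
      rw [hcm] at this
      rw [← this, hfx]
    -- all y with w y ≠ 0 have f y = M
    have hyle : ∀ y ∈ s, w y * f y ≤ w y * M := by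
      intro y hy
      have hfy : f y ≤ M := by
        obtain ⟨π, _, rfl⟩ := Finset.mem_image.mp hy
        exact hle π
      exact mul_le_mul_of_nonneg_left hfy (hw₀ y hy)
    have hall : ∀ y ∈ s, w y * f y = w y * M := by
      rw [← Finset.sum_eq_sum_iff_of_le hyle]
      rw [hfsum]
      rw [← Finset.sum_mul, hw₁, one_mul]
    -- so x ∈ hull of the maximizers
    have hxT : x ∈ convexHull ℝ {x : Fin q → ℝ |
        ∃ π : Equiv.Perm (Fin q), Monotone (c ∘ π) ∧ permutohedronVertex q π = x} := by
      rw [← hwx, ← Finset.centerMass_filter_ne_zero]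
      apply Finset.centerMass_mem_convexHull
      · intro y hy; exact hw₀ y (Finset.mem_filter.mp hy).1
      · rw [Finset.sum_filter_ne_zero]
        rw [hw₁]; norm_num
      · intro y hy
        obtain ⟨hys, hwy⟩ := Finset.mem_filter.mp hy
        obtain ⟨π, _, rfl⟩ := Finset.mem_image.mp hys
        refine ⟨π, ?_, rfl⟩
        apply (heq π).mp
        have := hall _ hys
        have hwpos : 0 < w (permutohedronVertex q π) := (hw₀ _ hys).lt_of_ne (Ne.symm hwy)
        exact mul_left_cancel₀ (ne_of_gt hwpos) this
    exact hxT
  · intro hx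
    refine ⟨?_, ?_⟩
    · exact convexHull_mono hTsubS hx
    · intro y hy
      simp only [← hf_app]
      rw [hTeq x hx]
      exact hPle y hy
end

section
/- Let c : Fin q → ℝ and let s = (Finset.univ.image c).card be the number of distinct values taken by c. Then the direction of the affine span over ℝ of the set {P_π | Monotone (c ∘ π)} has finrank q − s. (Equivalently: the face of the permutohedron corresponding to an ordered partition of {1,…,q} into s nonempty blocks has dimension q − s.) -/
open Finset

lemma lower_finset_iff {q : ℕ} (A : Finset (Fin q))
    (hA : ∀ j k : Fin q, j ≤ k → k ∈ A → j ∈ A) (k : Fin q) :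
    k ∈ A ↔ (k : ℕ) < A.card := by
  constructor
  · intro hk
    have hsub : Finset.Iic k ⊆ A := fun j hj => hA j k (Finset.mem_Iic.mp hj) hk
    have h1 : (Finset.Iic k).card ≤ A.card := Finset.card_le_card hsub
    have h2 : (Finset.Iic k).card = (k : ℕ) + 1 := by
      simp
    omega
  · intro hk
    by_contra hkA
    have hsub : A ⊆ Finset.Iio k := by
      intro j hj
      rw [Finset.mem_Iio]
      by_contra hjk
      exact hkA (hA k j (le_of_not_gt hjk) hj)
    have h1 : A.card ≤ (Finset.Iio k).card := Finset.card_le_card hsub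
    have h2 : (Finset.Iio k).card = (k : ℕ) := by
      simp
    omega

lemma filter_card_comp {q : ℕ} (π : Equiv.Perm (Fin q)) (p : Fin q → Prop) [DecidablePred p] :
    (univ.filter (fun k => p (π k))).card = (univ.filter p).card := by
  apply Finset.card_bij (fun k _ => π k)
  · intro k hk; simp at hk ⊢; exact hk
  · intro a ha b hb h; exact π.injective h
  · intro b hb; exact ⟨π.symm b, by simp at hb ⊢; simpa using hb, by simp⟩

lemma sum_block_eq {q : ℕ} (c : Fin q → ℝ) (π : Equiv.Perm (Fin q))
    (hπ : Monotone (c ∘ π)) (v : ℝ) :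
    ∑ i ∈ univ.filter (fun i => c i = v), permutohedronVertex q π i
      = ∑ k ∈ univ.filter (fun k : Fin q =>
          (univ.filter (fun i => c i < v)).card ≤ (k : ℕ) ∧
          (k : ℕ) < (univ.filter (fun i => c i ≤ v)).card),
          (((k : ℕ) : ℝ) + 1 - ((q : ℝ) + 1) / 2) := by
  -- reindex by π
  have h1 : ∑ i ∈ univ.filter (fun i => c i = v), permutohedronVertex q π i
      = ∑ k ∈ univ.filter (fun k => c (π k) = v),
          (((k : ℕ) : ℝ) + 1 - ((q : ℝ) + 1) / 2) := by
    apply Finset.sum_nbij' (fun i => π.symm i) (fun k => π k)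
    · intro i hi; simp at hi ⊢; simpa using hi
    · intro k hk; simp at hk ⊢; exact hk
    · intro i _; simp
    · intro k _; simp
    · intro i _; simp [permutohedronVertex]
  rw [h1]
  congr 1
  ext k
  have hlt : k ∈ univ.filter (fun k => c (π k) < v) ↔
      (k : ℕ) < (univ.filter (fun k => c (π k) < v)).card := by
    apply lower_finset_iff
    intro j k hjk hk
    simp at hk ⊢
    exact lt_of_le_of_lt (hπ hjk) hk
  have hle : k ∈ univ.filter (fun k => c (π k) ≤ v) ↔
      (k : ℕ) < (univ.filter (fun k => c (π k) ≤ v)).card := by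
    apply lower_finset_iff
    intro j k hjk hk
    simp at hk ⊢
    exact le_trans (hπ hjk) hk
  simp only [Finset.mem_filter, Finset.mem_univ, true_and] at hlt hle ⊢
  rw [filter_card_comp π (fun i => c i < v)] at hlt
  rw [filter_card_comp π (fun i => c i ≤ v)] at hle
  constructor
  · intro h
    refine ⟨?_, hle.mp h.le⟩
    by_contra hcon
    push_neg at hcon
    exact absurd (hlt.mpr hcon) (by rw [h]; exact lt_irrefl v)
  · rintro ⟨ha, hb⟩
    have h2 : c (π k) ≤ v := hle.mpr hb
    have h3 : ¬ c (π k) < v := fun h => absurd (hlt.mp h) (by omega)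
    exact le_antisymm h2 (not_lt.mp h3)

/-- The blockwise-sum linear map. -/
noncomputable def blockSum {q : ℕ} (c : Fin q → ℝ) :
    (Fin q → ℝ) →ₗ[ℝ] (↥(Finset.univ.image c) → ℝ) where
  toFun x := fun v => ∑ i ∈ univ.filter (fun i => c i = (v : ℝ)), x i
  map_add' x y := by funext v; simp [Finset.sum_add_distrib]
  map_smul' a x := by funext v; simp [Finset.mul_sum]

lemma blockSum_surjective {q : ℕ} (c : Fin q → ℝ) :
    Function.Surjective (blockSum c) := by
  intro y
  refine ⟨fun i => y ⟨c i, Finset.mem_image_of_mem c (mem_univ i)⟩ /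
      ((univ.filter (fun j => c j = c i)).card : ℝ), ?_⟩
  funext v
  obtain ⟨w, hw⟩ := v
  obtain ⟨i0, _, hi0⟩ := Finset.mem_image.mp hw
  have hcard : (univ.filter (fun j => c j = w)).card ≠ 0 := by
    rw [← Nat.pos_iff_ne_zero, Finset.card_pos]
    exact ⟨i0, by simp [hi0]⟩
  simp only [blockSum, LinearMap.coe_mk, AddHom.coe_mk]
  have : ∀ i ∈ univ.filter (fun i => c i = w),
      y ⟨c i, Finset.mem_image_of_mem c (mem_univ i)⟩ /
        ((univ.filter (fun j => c j = c i)).card : ℝ)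
      = y ⟨w, hw⟩ / ((univ.filter (fun j => c j = w)).card : ℝ) := by
    intro i hi
    simp only [mem_filter, mem_univ, true_and] at hi
    congr 1 <;> simp [hi]
  rw [Finset.sum_congr rfl this, Finset.sum_const, nsmul_eq_mul]
  field_simp

lemma finrank_ker_blockSum {q : ℕ} (c : Fin q → ℝ) :
    Module.finrank ℝ (LinearMap.ker (blockSum c)) = q - (Finset.univ.image c).card := by
  have h := LinearMap.finrank_range_add_finrank_ker (blockSum c)
  rw [LinearMap.range_eq_top.mpr (blockSum_surjective c)] at h
  rw [finrank_top] at h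
  have h2 : Module.finrank ℝ (↥(Finset.univ.image c) → ℝ) = (Finset.univ.image c).card := by
    rw [Module.finrank_pi]
    exact Fintype.card_coe _
  rw [h2, Module.finrank_fin_fun] at h
  omega

lemma vectorSpan_le_ker {q : ℕ} (c : Fin q → ℝ) :
    vectorSpan ℝ {x : Fin q → ℝ |
      ∃ π : Equiv.Perm (Fin q), Monotone (c ∘ π) ∧ permutohedronVertex q π = x}
      ≤ LinearMap.ker (blockSum c) := by
  rw [vectorSpan_def]
  rw [Submodule.span_le]
  rintro z ⟨x, hx, y, hy, rfl⟩
  obtain ⟨π, hπ, rfl⟩ := hx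
  obtain ⟨π', hπ', rfl⟩ := hy
  rw [SetLike.mem_coe, LinearMap.mem_ker]
  show blockSum c (permutohedronVertex q π - permutohedronVertex q π') = 0
  rw [map_sub]
  funext v
  simp only [Pi.sub_apply, Pi.zero_apply, blockSum, LinearMap.coe_mk, AddHom.coe_mk]
  rw [sum_block_eq c π hπ (v : ℝ), sum_block_eq c π' hπ' (v : ℝ), sub_self]

lemma single_sub_mem {q : ℕ} (c : Fin q → ℝ) {i j : Fin q} (hij : i ≠ j) (hc : c i = c j) :
    (Pi.single i 1 - Pi.single j 1 : Fin q → ℝ) ∈ vectorSpan ℝ {x : Fin q → ℝ |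
      ∃ π : Equiv.Perm (Fin q), Monotone (c ∘ π) ∧ permutohedronVertex q π = x} := by
  set σ := Tuple.sort c with hσdef
  have hσ := Tuple.monotone_sort c
  set k := σ.symm i with hk
  set l := σ.symm j with hl
  have hkl : k ≠ l := fun h => hij (σ.symm.injective h)
  set σ' := σ * Equiv.swap k l with hσ'
  have hcomp : c ∘ ⇑σ' = c ∘ ⇑σ := by
    funext m
    simp only [Function.comp_apply, hσ', Equiv.Perm.mul_apply]
    rcases eq_or_ne m k with rfl | hmk
    · rw [Equiv.swap_apply_left]
      simp only [hk, hl, Equiv.apply_symm_apply]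
      exact hc.symm
    · rcases eq_or_ne m l with rfl | hml
      · rw [Equiv.swap_apply_right]
        simp only [hk, hl, Equiv.apply_symm_apply]
        exact hc
      · rw [Equiv.swap_apply_of_ne_of_ne hmk hml]
  have hσ'mono : Monotone (c ∘ ⇑σ') := hcomp ▸ hσ
  have hmem1 : permutohedronVertex q σ ∈ {x : Fin q → ℝ |
      ∃ π : Equiv.Perm (Fin q), Monotone (c ∘ π) ∧ permutohedronVertex q π = x} :=
    ⟨σ, hσ, rfl⟩
  have hmem2 : permutohedronVertex q σ' ∈ {x : Fin q → ℝ |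
      ∃ π : Equiv.Perm (Fin q), Monotone (c ∘ π) ∧ permutohedronVertex q π = x} :=
    ⟨σ', hσ'mono, rfl⟩
  have hdiff := vsub_mem_vectorSpan ℝ hmem1 hmem2
  set t : ℝ := ((k : ℕ) : ℝ) - ((l : ℕ) : ℝ) with ht
  have htne : t ≠ 0 := by
    rw [ht, sub_ne_zero]
    exact fun h => hkl (Fin.ext (Nat.cast_injective h))
  have hsymm : ∀ m : Fin q, σ'.symm m = Equiv.swap k l (σ.symm m) := by
    intro m
    show ((σ * Equiv.swap k l)⁻¹ : Equiv.Perm (Fin q)) m = _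
    rw [mul_inv_rev, Equiv.swap_inv]
    rfl
  have hP : permutohedronVertex q σ -ᵥ permutohedronVertex q σ'
      = t • (Pi.single i 1 - Pi.single j 1 : Fin q → ℝ) := by
    funext m
    show permutohedronVertex q σ m - permutohedronVertex q σ' m = _
    simp only [permutohedronVertex, hsymm m, Pi.smul_apply, Pi.sub_apply, smul_eq_mul,
      Pi.single_apply]
    rcases eq_or_ne m i with hmi | hmi
    · have e1 : σ.symm m = k := by rw [hmi]
      rw [e1, Equiv.swap_apply_left, if_pos hmi, if_neg (by rw [hmi]; exact hij), ht]
      ring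
    · rcases eq_or_ne m j with hmj | hmj
      · have e1 : σ.symm m = l := by rw [hmj]
        rw [e1, Equiv.swap_apply_right, if_neg hmi, if_pos hmj, ht]
        ring
      · have h1 : σ.symm m ≠ k := fun h => hmi (by apply σ.symm.injective; rw [h, hk])
        have h2 : σ.symm m ≠ l := fun h => hmj (by apply σ.symm.injective; rw [h, hl])
        rw [Equiv.swap_apply_of_ne_of_ne h1 h2, if_neg hmi, if_neg hmj]
        ring
  have : (Pi.single i 1 - Pi.single j 1 : Fin q → ℝ)
      = t⁻¹ • (permutohedronVertex q σ -ᵥ permutohedronVertex q σ') := by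
    rw [hP, smul_smul, inv_mul_cancel₀ htne, one_smul]
  rw [this]
  exact Submodule.smul_mem _ _ hdiff

noncomputable def permRep {q : ℕ} (hq : 1 ≤ q) (c : Fin q → ℝ) (v : ℝ) : Fin q :=
  if h : ∃ i, c i = v then h.choose else ⟨0, hq⟩

lemma permRep_spec {q : ℕ} (hq : 1 ≤ q) (c : Fin q → ℝ) {v : ℝ} (h : ∃ i, c i = v) :
    c (permRep hq c v) = v := by
  rw [permRep, dif_pos h]
  exact h.choose_spec

/-- The face of the permutohedron corresponding to `c : Fin q → ℝ` (spanned by the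
vertices `P_π` with `c ∘ π` nondecreasing) has dimension `q - s`, where `s` is the number
of distinct values of `c`. -/
theorem permutohedron_face_dim (q : ℕ) (hq : 1 ≤ q) (c : Fin q → ℝ) :
    Module.finrank ℝ
      (affineSpan ℝ {x : Fin q → ℝ |
        ∃ π : Equiv.Perm (Fin q), Monotone (c ∘ π) ∧ permutohedronVertex q π = x}).direction =
      q - (Finset.univ.image c).card := by
  rw [direction_affineSpan]
  set S : Set (Fin q → ℝ) := {x : Fin q → ℝ |
    ∃ π : Equiv.Perm (Fin q), Monotone (c ∘ π) ∧ permutohedronVertex q π = x} with hS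
  set s := (Finset.univ.image c).card with hs
  -- upper bound
  have hub : Module.finrank ℝ (vectorSpan ℝ S) ≤ q - s := by
    calc Module.finrank ℝ (vectorSpan ℝ S)
        ≤ Module.finrank ℝ (LinearMap.ker (blockSum c)) :=
          Submodule.finrank_mono (vectorSpan_le_ker c)
      _ = q - s := finrank_ker_blockSum c
  -- the set of non-representatives
  set r : ℝ → Fin q := permRep hq c with hr
  have hrc : ∀ i : Fin q, c (r (c i)) = c i := fun i => permRep_spec hq c ⟨i, rfl⟩
  set T : Finset (Fin q) := univ.filter (fun i => r (c i) ≠ i) with hT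
  have hTcard : T.card = q - s := by
    have h1 : (univ.filter (fun i => r (c i) = i)).card = s := by
      rw [hs]
      apply Finset.card_bij (fun i _ => c i)
      · intro i _
        exact Finset.mem_image_of_mem c (mem_univ i)
      · intro a ha b hb h
        simp only [mem_filter, mem_univ, true_and] at ha hb
        rw [← ha, ← hb, h]
      · intro v hv
        obtain ⟨i0, _, hi0⟩ := Finset.mem_image.mp hv
        refine ⟨r v, ?_, ?_⟩
        · simp only [mem_filter, mem_univ, true_and]
          rw [permRep_spec hq c ⟨i0, hi0⟩]
        · exact permRep_spec hq c ⟨i0, hi0⟩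
    have h2 := Finset.card_filter_add_card_filter_not
      (s := (univ : Finset (Fin q))) (p := fun i => r (c i) = i)
    have h3 : (univ : Finset (Fin q)).card = q := by simp
    have h4 : s ≤ q := by
      show (Finset.univ.image c).card ≤ q
      calc (Finset.univ.image c).card ≤ (univ : Finset (Fin q)).card := Finset.card_image_le
        _ = q := h3
    have h5 : T.card = (univ.filter (fun a => ¬ r (c a) = a)).card := rfl
    omega
  -- linearly independent family
  set g : ↥T → (Fin q → ℝ) := fun i => Pi.single (i : Fin q) 1 - Pi.single (r (c i)) 1
    with hg
  have hgmem : ∀ i : ↥T, g i ∈ vectorSpan ℝ S := by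
    intro i
    have hiT : r (c (i : Fin q)) ≠ (i : Fin q) := (Finset.mem_filter.mp i.2).2
    exact single_sub_mem c (Ne.symm hiT) (hrc (i : Fin q)).symm
  have hglin : LinearIndependent ℝ g := by
    rw [linearIndependent_iff']
    intro t a hsum j hj
    have h0 := congrFun hsum (j : Fin q)
    simp only [Finset.sum_apply, Pi.smul_apply, Pi.zero_apply, smul_eq_mul] at h0
    have hgval : ∀ i ∈ t, (g i) (j : Fin q) = if j = i then 1 else 0 := by
      intro i _
      rw [hg]
      simp only [Pi.sub_apply, Pi.single_apply]
      have h2 : ((j : Fin q) = r (c (i : Fin q))) = False := by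
        simp only [eq_iff_iff, iff_false]
        intro hcon
        have hcj : c (j : Fin q) = c (i : Fin q) := by rw [hcon]; exact hrc _
        have : r (c (j : Fin q)) = (j : Fin q) := by rw [hcj, ← hcon]
        exact (Finset.mem_filter.mp j.2).2 this
      simp only [h2, if_false, sub_zero]
      by_cases hji : (j : Fin q) = (i : Fin q)
      · rw [if_pos hji, if_pos (Subtype.ext hji)]
      · rw [if_neg hji, if_neg (fun h => hji (congrArg _ h))]
    rw [Finset.sum_congr rfl (fun i hi => by rw [hgval i hi])] at h0
    simp only [mul_ite, mul_one, mul_zero] at h0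
    rw [Finset.sum_ite_eq t j a] at h0  -- check direction
    rw [if_pos hj] at h0
    exact h0
  have hspan : Submodule.span ℝ (Set.range g) ≤ vectorSpan ℝ S := by
    rw [Submodule.span_le]
    rintro x ⟨i, rfl⟩
    exact hgmem i
  have hlb : q - s ≤ Module.finrank ℝ (vectorSpan ℝ S) := by
    have h1 : Module.finrank ℝ (Submodule.span ℝ (Set.range g)) = T.card := by
      rw [finrank_span_eq_card hglin, Fintype.card_coe]
    calc q - s = T.card := hTcard.symm
      _ = Module.finrank ℝ (Submodule.span ℝ (Set.range g)) := h1.symm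
      _ ≤ Module.finrank ℝ (vectorSpan ℝ S) := Submodule.finrank_mono hspan
  omega
end

section
/- For all c, d : Fin q → ℝ, the inclusion of closed faces convexHull ℝ {P_π | Monotone (d ∘ π)} ⊆ convexHull ℝ {P_π | Monotone (c ∘ π)} holds if and only if for all indices i j, c i < c j implies d i < d j. (Equivalently: the closed face τ_{Ĵ} of the permutohedron is contained in the closed face τ_J if and only if the ordered partition Ĵ = J(d) is a refinement of J = J(c), where J(c) is the ordered partition of {1,…,q} grouping indices with equal c-values, ordered by those values.) -/
open Finset

/-- The linear functional `x ↦ ∑ i, c i * x i`. -/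
lemma permuto_linfun_isLinear (q : ℕ) (c : Fin q → ℝ) :
    IsLinearMap ℝ (fun x : Fin q → ℝ => ∑ i, c i * x i) := by
  constructor
  · intro x y; simp [mul_add, Finset.sum_add_distrib]
  · intro r x
    simp only [smul_eq_mul, Pi.smul_apply]
    rw [Finset.mul_sum]
    apply Finset.sum_congr rfl; intro i _; ring

/-- Value of the functional on a vertex. -/
lemma permuto_linfun_vertex (q : ℕ) (c : Fin q → ℝ) (π : Equiv.Perm (Fin q)) :
    ∑ i, c i * permutohedronVertex q π i
      = ∑ k, (((k : Fin q) : ℝ) + 1) * c (π k) - ((q : ℝ) + 1) / 2 * ∑ i, c i := by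
  have h1 : ∑ i, c i * permutohedronVertex q π i
      = ∑ i, (c i * (((π.symm i : ℕ) : ℝ) + 1) - ((q : ℝ) + 1) / 2 * c i) := by
    apply Finset.sum_congr rfl; intro i _; simp [permutohedronVertex]; ring
  rw [h1, Finset.sum_sub_distrib, ← Finset.mul_sum]
  congr 1
  rw [← Equiv.sum_comp π (fun i => c i * (((π.symm i : ℕ) : ℝ) + 1))]
  apply Finset.sum_congr rfl; intro k _; simp [mul_comm]

/-- Rearrangement: the sorted arrangement maximizes `∑ (k+1) * c (π k)`. -/
lemma permuto_rearrangement (q : ℕ) (c : Fin q → ℝ) (σ τ : Equiv.Perm (Fin q))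
    (hσ : Monotone (c ∘ σ)) :
    ∑ k, (((k : Fin q) : ℝ) + 1) * c (τ k) ≤ ∑ k, (((k : Fin q) : ℝ) + 1) * c (σ k) := by
  have hmono : Monovary (fun k : Fin q => ((k : ℝ) + 1)) (c ∘ σ) := by
    intro i j hij
    have hij' : i ≤ j := by
      by_contra h
      exact absurd (hσ (le_of_not_ge h)) (not_le.2 hij)
    have : ((i : ℕ) : ℝ) ≤ ((j : ℕ) : ℝ) := by exact_mod_cast (Fin.le_def.mp hij')
    show ((i : ℕ) : ℝ) + 1 ≤ ((j : ℕ) : ℝ) + 1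
    linarith
  have key := hmono.sum_smul_comp_perm_le_sum_smul (σ := σ⁻¹ * τ)
  simpa [smul_eq_mul, Equiv.Perm.mul_apply] using key

/-- The closed face of the permutohedron determined by `d` is contained in the closed face
determined by `c` if and only if the ordered partition `J(d)` refines `J(c)`, i.e. iff
`c i < c j → d i < d j` for all `i j`. -/
theorem permutohedron_face_subset_iff_refines (q : ℕ) (hq : 1 ≤ q) (c d : Fin q → ℝ) :
    (convexHull ℝ {x : Fin q → ℝ |
        ∃ π : Equiv.Perm (Fin q), Monotone (d ∘ π) ∧ permutohedronVertex q π = x} ⊆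
      convexHull ℝ {x : Fin q → ℝ |
        ∃ π : Equiv.Perm (Fin q), Monotone (c ∘ π) ∧ permutohedronVertex q π = x}) ↔
    (∀ i j : Fin q, c i < c j → d i < d j) := by
  constructor
  · -- Hard direction
    intro hsub i j hcij
    by_contra hnd
    have hdji : d j ≤ d i := le_of_not_gt hnd
    have hij : i ≠ j := fun h => by simp [h] at hcij
    -- construct π with d∘π monotone and π.symm j < π.symm i
    obtain ⟨π, hπmono, hπab⟩ : ∃ π : Equiv.Perm (Fin q),
        Monotone (d ∘ π) ∧ π.symm j < π.symm i := by
      set σ := Tuple.sort d with hσdef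
      have hσ : Monotone (d ∘ σ) := Tuple.monotone_sort d
      by_cases hlt : σ.symm j < σ.symm i
      · exact ⟨σ, hσ, hlt⟩
      · have hab : σ.symm i < σ.symm j :=
          lt_of_le_of_ne (le_of_not_gt hlt) (fun h => hij (by
            have := congrArg σ h; simpa using this))
        have hdij : d i = d j := by
          have : d (σ (σ.symm i)) ≤ d (σ (σ.symm j)) := hσ (le_of_lt hab)
          simp at this
          exact le_antisymm this hdji
        refine ⟨σ * Equiv.swap (σ.symm i) (σ.symm j), ?_, ?_⟩
        · have heq : d ∘ (σ * Equiv.swap (σ.symm i) (σ.symm j)) = d ∘ σ := by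
            funext k
            simp only [Function.comp_apply, Equiv.Perm.mul_apply]
            rcases eq_or_ne k (σ.symm i) with rfl | hki
            · simp [Equiv.swap_apply_left, hdij]
            rcases eq_or_ne k (σ.symm j) with rfl | hkj
            · simp [Equiv.swap_apply_right, hdij]
            · rw [Equiv.swap_apply_of_ne_of_ne hki hkj]
          rw [heq]; exact hσ
        · have hsj : (σ * Equiv.swap (σ.symm i) (σ.symm j)).symm j = σ.symm i := by
            apply (Equiv.symm_apply_eq _).2
            simp [Equiv.Perm.mul_apply, Equiv.swap_apply_left]
          have hsi : (σ * Equiv.swap (σ.symm i) (σ.symm j)).symm i = σ.symm j := by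
            apply (Equiv.symm_apply_eq _).2
            simp [Equiv.Perm.mul_apply, Equiv.swap_apply_right]
          rw [hsj, hsi]; exact hab
    -- the point P_π lies in the d-face, hence in the c-face
    have hxmem : permutohedronVertex q π ∈ convexHull ℝ {x : Fin q → ℝ |
        ∃ π : Equiv.Perm (Fin q), Monotone (c ∘ π) ∧ permutohedronVertex q π = x} :=
      hsub (subset_convexHull ℝ _ ⟨π, hπmono, rfl⟩)
    -- the c-face lies in the hyperplane {x | L x = M}
    set σc := Tuple.sort c with hσcdef
    have hσc : Monotone (c ∘ σc) := Tuple.monotone_sort c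
    set M : ℝ := ∑ i, c i * permutohedronVertex q σc i with hMdef
    have hplane : convexHull ℝ {x : Fin q → ℝ |
        ∃ π : Equiv.Perm (Fin q), Monotone (c ∘ π) ∧ permutohedronVertex q π = x}
        ⊆ {x | ∑ i, c i * x i = M} := by
      apply convexHull_min
      · rintro x ⟨σ, hσmono, rfl⟩
        have hcomp : c ∘ σ = c ∘ σc := Tuple.unique_monotone hσmono hσc
        show ∑ i, c i * permutohedronVertex q σ i = M
        rw [hMdef, permuto_linfun_vertex, permuto_linfun_vertex]
        congr 1
        apply Finset.sum_congr rfl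
        intro k _
        have : c (σ k) = c (σc k) := congrFun hcomp k
        rw [this]
      · exact convex_hyperplane (permuto_linfun_isLinear q c) M
    have hLx : ∑ i, c i * permutohedronVertex q π i = M := hplane hxmem
    -- but strictly less: swap argument
    set a := π.symm j with hadef
    set b := π.symm i with hbdef
    have hπa : π a = j := by simp [hadef]
    have hπb : π b = i := by simp [hbdef]
    have hcab : c (π b) < c (π a) := by rw [hπa, hπb]; exact hcij
    have hablt : a < b := hπab
    set τ := π * Equiv.swap a b with hτdef
    have hstep : ∑ k, (((k : Fin q) : ℝ) + 1) * c (π k)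
        < ∑ k, (((k : Fin q) : ℝ) + 1) * c (τ k) := by
      have hdiff : ∑ k, (((k : Fin q) : ℝ) + 1) * c (τ k)
          - ∑ k, (((k : Fin q) : ℝ) + 1) * c (π k)
          = ((b : ℝ) - (a : ℝ)) * (c (π a) - c (π b)) := by
        rw [← Finset.sum_sub_distrib]
        have hzero : ∀ x ∈ Finset.univ, x ∉ ({a, b} : Finset (Fin q)) →
            (((x : Fin q) : ℝ) + 1) * c (τ x) - (((x : Fin q) : ℝ) + 1) * c (π x) = 0 := by
          intro x _ hx
          simp only [Finset.mem_insert, Finset.mem_singleton, not_or] at hx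
          have : τ x = π x := by
            simp [hτdef, Equiv.Perm.mul_apply, Equiv.swap_apply_of_ne_of_ne hx.1 hx.2]
          rw [this]; ring
        rw [← Finset.sum_subset (Finset.subset_univ ({a, b} : Finset (Fin q))) hzero]
        have hne : a ≠ b := ne_of_lt hablt
        rw [Finset.sum_pair hne]
        have hτa : τ a = π b := by simp [hτdef, Equiv.swap_apply_left]
        have hτb : τ b = π a := by simp [hτdef, Equiv.swap_apply_right]
        rw [hτa, hτb]; ring
      have hpos : 0 < ((b : ℝ) - (a : ℝ)) * (c (π a) - c (π b)) := by
        apply mul_pos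
        · have : ((a : ℕ) : ℝ) < ((b : ℕ) : ℝ) := by exact_mod_cast (Fin.lt_def.mp hablt)
          linarith
        · linarith
      linarith
    have hle : ∑ k, (((k : Fin q) : ℝ) + 1) * c (τ k)
        ≤ ∑ k, (((k : Fin q) : ℝ) + 1) * c (σc k) :=
      permuto_rearrangement q c σc τ hσc
    have hLx' : ∑ i, c i * permutohedronVertex q π i < M := by
      rw [hMdef, permuto_linfun_vertex, permuto_linfun_vertex]
      have := lt_of_lt_of_le hstep hle
      linarith
    exact absurd hLx (ne_of_lt hLx')
  · -- Easy direction
    intro h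
    apply convexHull_mono
    rintro x ⟨π, hπ, rfl⟩
    refine ⟨π, ?_, rfl⟩
    intro k l hkl
    by_contra hc
    have hclt : c (π l) < c (π k) := lt_of_not_ge hc
    exact absurd (hπ hkl) (not_le.2 (h _ _ hclt))
end
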